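/- Let V be a separable reflexive Banach space, (S, Σ(S), μ) a σ-finite μ-complete measurable space, and A, A^n : S → 𝔐(V × V*) measurable maps into the set of maximal monotone operators. Assume: (a) for almost every x ∈ S, A^n(x) converges to A(x) in the sense of graphs as n → ∞; (b) the canonical extensions 𝒜 and 𝒜^n (from L^p(S,V) to L^q(S,V*), 1/p + 1/q = 1) are maximal monotone; (c) there exist [α_n, β_n] ∈ Gr 𝒜^n and [α, β] ∈ L^p(S,V) × L^q(S,V*) such that [α_n, β_n] → [α, β] strongly in L^p(S,V) × L^q(S,V*). Then 𝒜^n converges to 𝒜 in the sense of graphs. -/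

import Mathlib

open Filter Topology NormedSpace MeasureTheory
open scoped ENNReal

variable {V : Type*} [NormedAddCommGroup V] [NormedSpace ℝ V]

/-- A multivalued operator `A : V → 2^{V*}` is monotone. -/
def MonotoneOp (A : V → Set (StrongDual ℝ V)) : Prop :=
  ∀ ⦃v u : V⦄ ⦃v' u' : StrongDual ℝ V⦄, v' ∈ A v → u' ∈ A u → 0 ≤ (v' - u') (v - u)

/-- A multivalued operator `A : V → 2^{V*}` is maximal monotone. -/
def MaxMonotoneOp (A : V → Set (StrongDual ℝ V)) : Prop :=
  MonotoneOp A ∧ ∀ (v : V) (v' : StrongDual ℝ V),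
    (∀ (u : V) (u' : StrongDual ℝ V), u' ∈ A u → 0 ≤ (v' - u') (v - u)) → v' ∈ A v

/-- Graph convergence of multivalued operators `V → 2^{V*}`. -/
def GraphConv (An : ℕ → V → Set (StrongDual ℝ V)) (A : V → Set (StrongDual ℝ V)) : Prop :=
  ∀ (v : V) (v' : StrongDual ℝ V), v' ∈ A v →
    ∃ (w : ℕ → V) (w' : ℕ → StrongDual ℝ V),
      (∀ n, w' n ∈ An n (w n)) ∧
      Tendsto w atTop (𝓝 v) ∧ Tendsto w' atTop (𝓝 v')

/-- Measurability of a multivalued-operator-valued map. -/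
def MeasurableMultimap {S : Type*} [MeasurableSpace S]
    (A : S → V → Set (StrongDual ℝ V)) : Prop :=
  ∀ U : Set (V × StrongDual ℝ V), IsOpen U →
    MeasurableSet {x : S | ∃ p ∈ U, p.2 ∈ A x p.1}

variable {S : Type*} [MeasurableSpace S] {μ : Measure S}

/-- The canonical extension of `A : S → 𝔐(V × V*)` from `L^p(S,V)` to `L^q(S,V*)`. -/
def canonExt (A : S → V → Set (StrongDual ℝ V)) (p q : ℝ≥0∞) (μ : Measure S)
    (v : Lp V p μ) : Set (Lp (StrongDual ℝ V) q μ) :=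
  {v' | ∀ᵐ x ∂μ, v' x ∈ A x (v x)}

/-- Duality pairing between `L^p(S,V)` and `L^q(S,V*)`. -/
noncomputable def LpPairing (p q : ℝ≥0∞) (μ : Measure S)
    (v : Lp V p μ) (v' : Lp (StrongDual ℝ V) q μ) : ℝ :=
  ∫ x, (v' x) (v x) ∂μ

/-- Monotonicity w.r.t. the `L^p`–`L^q` duality pairing. -/
def LpMonotoneOp (p q : ℝ≥0∞) (μ : Measure S)
    (T : Lp V p μ → Set (Lp (StrongDual ℝ V) q μ)) : Prop :=
  ∀ ⦃v u : Lp V p μ⦄ ⦃v' u' : Lp (StrongDual ℝ V) q μ⦄, v' ∈ T v → u' ∈ T u →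
    0 ≤ LpPairing p q μ (v - u) (v' - u')

/-- Maximal monotonicity of an operator from `L^p(S,V)` to `2^{L^q(S,V*)}`. -/
def LpMaxMonotoneOp (p q : ℝ≥0∞) (μ : Measure S)
    (T : Lp V p μ → Set (Lp (StrongDual ℝ V) q μ)) : Prop :=
  LpMonotoneOp p q μ T ∧
  ∀ (v : Lp V p μ) (v' : Lp (StrongDual ℝ V) q μ),
    (∀ (u : Lp V p μ) (u' : Lp (StrongDual ℝ V) q μ), u' ∈ T u →
      0 ≤ LpPairing p q μ (v - u) (v' - u')) → v' ∈ T v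

/-- Graph convergence of operators from `L^p(S,V)` to `2^{L^q(S,V*)}` (strong convergence
of graphs in `L^p × L^q`). -/
def LpGraphConv (p q : ℝ≥0∞) (μ : Measure S)
    (Tn : ℕ → Lp V p μ → Set (Lp (StrongDual ℝ V) q μ))
    (T : Lp V p μ → Set (Lp (StrongDual ℝ V) q μ)) : Prop :=
  ∀ (v : Lp V p μ) (v' : Lp (StrongDual ℝ V) q μ), v' ∈ T v →
    ∃ (w : ℕ → Lp V p μ) (w' : ℕ → Lp (StrongDual ℝ V) q μ),
      (∀ n, w' n ∈ Tn n (w n)) ∧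
      Tendsto (fun n => ‖w n - v‖) atTop (𝓝 0) ∧
      Tendsto (fun n => ‖w' n - v'‖) atTop (𝓝 0)

section AuxLemmas

theorem separable_of_dual_separable (X : Type*) [NormedAddCommGroup X] [NormedSpace ℝ X]
    [TopologicalSpace.SeparableSpace (StrongDual ℝ X)] : TopologicalSpace.SeparableSpace X := by
  classical
  haveI : Nonempty (StrongDual ℝ X) := ⟨0⟩
  set g : ℕ → StrongDual ℝ X := TopologicalSpace.denseSeq (StrongDual ℝ X) with hgdef
  have hg : DenseRange g := TopologicalSpace.denseRange_denseSeq _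
  have hx : ∀ k, ∃ x : X, ‖x‖ ≤ 1 ∧ ‖g k‖ / 2 ≤ ‖g k x‖ := by
    intro k
    rcases eq_or_ne (g k) 0 with h | h
    · exact ⟨0, by simp [h]⟩
    · have hpos : (0:ℝ) < ‖g k‖ := norm_pos_iff.mpr h
      obtain ⟨x, hx1, hx2⟩ := (g k).exists_lt_apply_of_lt_opNorm (r := ‖g k‖ / 2) (by linarith)
      exact ⟨x, hx1.le, hx2.le⟩
  choose x hx1 hx2 using hx
  set M : Submodule ℝ X := Submodule.span ℝ (Set.range x) with hMdef
  have hsep : TopologicalSpace.IsSeparable (M : Set X) :=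
    (Set.countable_range x).isSeparable.span
  suffices hM : closure (M : Set X) = Set.univ by
    rw [← TopologicalSpace.isSeparable_univ_iff, ← hM]
    exact hsep.closure
  by_contra hne
  obtain ⟨b, hb⟩ : ∃ b, b ∉ closure (M : Set X) := by
    by_contra h; push_neg at h; exact hne (Set.eq_univ_of_forall h)
  obtain ⟨f, u, hfu, hub⟩ := geometric_hahn_banach_closed_point
    (M.convex.closure) isClosed_closure hb
  have hf0 : ∀ y ∈ M, f y = 0 := by
    intro y hy
    by_contra hfy
    have h1 : ∀ t : ℝ, t * f y < u := fun t => by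
      have ht : (t • y) ∈ closure (M : Set X) := subset_closure (M.smul_mem t hy)
      simpa using hfu _ ht
    have h2 := h1 ((|u|+1) / f y)
    rw [div_mul_cancel₀ _ hfy] at h2
    have := abs_nonneg u
    have := le_abs_self u
    linarith
  have hu0 : 0 < u := by
    have := hfu 0 (subset_closure M.zero_mem); simpa using this
  have hfb : 0 < f b := lt_trans hu0 hub
  have hfpos : 0 < ‖f‖ := by
    refine norm_pos_iff.mpr fun h => ?_
    rw [h] at hfb; simp at hfb
  obtain ⟨k, hk⟩ : ∃ k, dist f (g k) < ‖f‖ / 3 := by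
    obtain ⟨y, ⟨k, rfl⟩, hy⟩ := Metric.mem_closure_iff.mp (hg f) (‖f‖/3) (by positivity)
    exact ⟨k, hy⟩
  have hk' : ‖g k - f‖ < ‖f‖ / 3 := by
    rw [dist_eq_norm, norm_sub_rev] at hk; exact hk
  have hfx : f (x k) = 0 := hf0 _ (Submodule.subset_span ⟨k, rfl⟩)
  have heq : ‖g k (x k)‖ = ‖(g k - f) (x k)‖ := by
    simp [ContinuousLinearMap.sub_apply, hfx]
  have hb2 : ‖(g k - f) (x k)‖ ≤ ‖g k - f‖ * ‖x k‖ := (g k - f).le_opNorm _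
  have h2 : ‖g k‖ ≤ 2 * ‖g k - f‖ := by
    have h3 := hx2 k
    rw [heq] at h3
    nlinarith [hx1 k, norm_nonneg (g k - f)]
  have h4 : ‖f‖ ≤ ‖f - g k‖ + ‖g k‖ := by
    have := norm_sub_norm_le f (g k); linarith [norm_sub_le f (g k), abs_norm_sub_norm_le f (g k)]
  rw [norm_sub_rev] at h4
  linarith

variable {V : Type*} [NormedAddCommGroup V] [NormedSpace ℝ V]

theorem dual_separable [TopologicalSpace.SeparableSpace V]
    (hrefl : Function.Surjective (inclusionInDoubleDual ℝ V)) :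
    TopologicalSpace.SeparableSpace (StrongDual ℝ V) := by
  haveI : TopologicalSpace.SeparableSpace (StrongDual ℝ (StrongDual ℝ V)) :=
    hrefl.denseRange.separableSpace (inclusionInDoubleDual ℝ V).continuous
  exact separable_of_dual_separable _



/-- Graph of a maximal monotone operator is closed. -/
theorem maxMonotoneOp_isClosed_graph {M : V → Set (StrongDual ℝ V)}
    (hM : MaxMonotoneOp M) :
    IsClosed {z : V × StrongDual ℝ V | z.2 ∈ M z.1} := by
  refine isClosed_of_closure_subset fun z hz => ?_
  refine hM.2 z.1 z.2 fun u u' hu => ?_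
  have hcont : Continuous fun w : V × StrongDual ℝ V => (w.2 - u') (w.1 - u) := by
    have h1 : Continuous fun w : V × StrongDual ℝ V => ((w.2 - u' : StrongDual ℝ V), (w.1 - u : V)) := by
      fun_prop
    exact isBoundedBilinearMap_apply.continuous.comp h1
  have hcl : IsClosed {w : V × StrongDual ℝ V | 0 ≤ (w.2 - u') (w.1 - u)} :=
    isClosed_le continuous_const hcont
  have hsub : {z : V × StrongDual ℝ V | z.2 ∈ M z.1} ⊆ {w | 0 ≤ (w.2 - u') (w.1 - u)} :=
    fun w hw => hM.1 hw hu
  exact hcl.closure_subset_iff.mpr hsub hz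

private theorem measurable_dite_find {S : Type*} [MeasurableSpace S] {P : ℕ → S → Prop}
    [∀ x, DecidablePred fun n => P n x] [∀ x, Decidable (∃ n, P n x)]
    (hP : ∀ n, MeasurableSet {x | P n x}) :
    Measurable fun x => if h : ∃ n, P n x then Nat.find h else 0 := by
  apply measurable_to_countable'
  intro n
  have heq : (fun x => if h : ∃ n, P n x then Nat.find h else 0) ⁻¹' {n} =
      (({x | P n x} ∩ ⋂ m ∈ Set.Iio n, {x | P m x}ᶜ) ∪
        ((⋂ m, {x | P m x}ᶜ) ∩ (if n = 0 then Set.univ else ∅))) := by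
    ext x
    simp only [Set.mem_preimage, Set.mem_singleton_iff, Set.mem_union, Set.mem_inter_iff,
      Set.mem_setOf_eq, Set.mem_iInter, Set.mem_compl_iff, Set.mem_Iio]
    by_cases h : ∃ m, P m x
    · rw [dif_pos h, Nat.find_eq_iff]
      constructor
      · rintro ⟨h1, h2⟩; exact Or.inl ⟨h1, h2⟩
      · rintro (⟨h1, h2⟩ | ⟨h1, -⟩)
        · exact ⟨h1, h2⟩
        · obtain ⟨m, hm⟩ := h; exact absurd hm (h1 m)
    · rw [dif_neg h]
      push_neg at h
      constructor
      · rintro rfl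
        exact Or.inr ⟨h, by simp⟩
      · rintro (⟨h1, -⟩ | ⟨-, h2⟩)
        · exact absurd h1 (h n)
        · by_cases hn : n = 0
          · exact hn.symm
          · rw [if_neg hn] at h2; exact absurd h2 (Set.notMem_empty x)
  rw [heq]
  refine MeasurableSet.union ?_ ?_
  · exact (hP n).inter (MeasurableSet.biInter (Set.to_countable _) fun m _ => (hP m).compl)
  · refine (MeasurableSet.iInter fun m => (hP m).compl).inter ?_
    split_ifs <;> simp



theorem krn_selection {S : Type*} [MeasurableSpace S]
    [CompleteSpace V] [TopologicalSpace.SeparableSpace V]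
    [TopologicalSpace.SeparableSpace (StrongDual ℝ V)]
    (B : S → Set (V × StrongDual ℝ V))
    (hBmeas : ∀ U : Set (V × StrongDual ℝ V), IsOpen U → MeasurableSet {x | ∃ p ∈ U, p ∈ B x})
    (hBcl : ∀ x, IsClosed (B x))
    (v : S → V) (v' : S → StrongDual ℝ V) (hv : StronglyMeasurable v) (hv' : StronglyMeasurable v')
    {ε : ℝ} (hε : 0 < ε) :
    ∃ (G : Set S) (τ : S → V × StrongDual ℝ V), MeasurableSet G ∧ StronglyMeasurable τ ∧
      (∀ x, (∃ p ∈ B x, dist p (v x, v' x) < ε / 2) → x ∈ G) ∧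
      ∀ x ∈ G, τ x ∈ B x ∧ dist (τ x) (v x, v' x) ≤ 5 * ε := by
  classical
  borelize (V × StrongDual ℝ V)
  haveI : Nonempty (V × StrongDual ℝ V) := ⟨(0, 0)⟩
  set e : ℕ → V × StrongDual ℝ V := TopologicalSpace.denseSeq _ with he
  have hde : DenseRange e := TopologicalSpace.denseRange_denseSeq _
  set r : ℕ → ℝ := fun k => ε * (1 / 2) ^ k with hr
  have hrpos : ∀ k, 0 < r k := fun k => by rw [hr]; positivity
  have hhit : ∀ (c : V × StrongDual ℝ V) (ρ : ℝ), MeasurableSet {x | ∃ p ∈ B x, dist p c < ρ} := by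
    intro c ρ
    have h1 := hBmeas (Metric.ball c ρ) Metric.isOpen_ball
    have h2 : {x | ∃ p ∈ Metric.ball c ρ, p ∈ B x} = {x | ∃ p ∈ B x, dist p c < ρ} := by
      ext x
      exact ⟨fun ⟨p, hp1, hp2⟩ => ⟨p, hp2, Metric.mem_ball.mp hp1⟩,
        fun ⟨p, hp1, hp2⟩ => ⟨p, Metric.mem_ball.mpr hp2, hp1⟩⟩
    rwa [h2] at h1
  have hdist : ∀ c : V × StrongDual ℝ V, Measurable fun x => dist c (v x, v' x) := by
    intro c
    have h1 : StronglyMeasurable fun x => (v x, v' x) := hv.prodMk hv'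
    exact (stronglyMeasurable_const.dist h1).measurable
  set Q0 : ℕ → S → Prop := fun i x =>
    dist (e i) (v x, v' x) < ε ∧ ∃ p ∈ B x, dist p (e i) < r 0 with hQ0
  have hQ0meas : ∀ i, MeasurableSet {x | Q0 i x} := fun i =>
    ((hdist (e i)) measurableSet_Iio).inter (hhit (e i) (r 0))
  set f0 : S → ℕ := fun x => if h : ∃ i, Q0 i x then Nat.find h else 0 with hf0
  set fs : ℕ → (S → ℕ) → S → ℕ := fun k ih x =>
    if h : ∃ j, dist (e j) (e (ih x)) < r k + r (k + 1) ∧ ∃ p ∈ B x, dist p (e j) < r (k + 1)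
    then Nat.find h else 0 with hfs
  set ι : ℕ → S → ℕ := fun k => Nat.rec f0 fs k with hιdef
  have hι0 : ι 0 = f0 := rfl
  have hιs : ∀ k, ι (k + 1) = fs k (ι k) := fun k => rfl
  have hιmeas : ∀ k, Measurable (ι k) := by
    intro k
    induction k with
    | zero => exact measurable_dite_find hQ0meas
    | succ k ih =>
      rw [hιs k, hfs]
      refine measurable_dite_find fun j => ?_
      refine MeasurableSet.inter ?_ (hhit (e j) (r (k + 1)))
      have hms := ih (show MeasurableSet {i : ℕ | dist (e j) (e i) < r k + r (k + 1)} from trivial)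
      exact hms
  set G : Set S := ⋃ i, {x | Q0 i x} with hG
  have hGmeas : MeasurableSet G := MeasurableSet.iUnion hQ0meas
  have hGex : ∀ x ∈ G, ∃ i, Q0 i x := by
    intro x hx
    obtain ⟨i, hi⟩ := Set.mem_iUnion.mp hx
    exact ⟨i, hi⟩
  have hcov : ∀ x, (∃ p ∈ B x, dist p (v x, v' x) < ε / 2) → x ∈ G := by
    rintro x ⟨p, hpB, hpd⟩
    obtain ⟨y, ⟨i, rfl⟩, hy⟩ := Metric.mem_closure_iff.mp (hde p) (ε / 2) (by positivity)
    refine Set.mem_iUnion.mpr ⟨i, ?_, p, hpB, ?_⟩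
    · calc dist (e i) (v x, v' x) ≤ dist (e i) p + dist p (v x, v' x) := dist_triangle _ _ _
        _ < ε / 2 + ε / 2 := add_lt_add (by rwa [dist_comm]) hpd
        _ = ε := by ring
    · have hr0 : r 0 = ε := by rw [hr]; norm_num
      rw [hr0]
      linarith
  have hQ0x : ∀ x ∈ G, Q0 (ι 0 x) x := by
    intro x hx
    have h : ∃ i, Q0 i x := hGex x hx
    have : ι 0 x = Nat.find h := by rw [hι0, hf0]; exact dif_pos h
    rw [this]
    exact Nat.find_spec h
  have hstep : ∀ x, ∀ k, (∃ p ∈ B x, dist p (e (ι k x)) < r k) →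
      (∃ p ∈ B x, dist p (e (ι (k + 1) x)) < r (k + 1)) ∧
        dist (e (ι (k + 1) x)) (e (ι k x)) < r k + r (k + 1) := by
    rintro x k ⟨p, hpB, hpd⟩
    have hj : ∃ j, dist (e j) (e (ι k x)) < r k + r (k + 1) ∧
        ∃ p ∈ B x, dist p (e j) < r (k + 1) := by
      obtain ⟨y, ⟨j, rfl⟩, hy⟩ := Metric.mem_closure_iff.mp (hde p) (r (k + 1)) (hrpos _)
      refine ⟨j, ?_, p, hpB, hy⟩
      calc dist (e j) (e (ι k x)) ≤ dist (e j) p + dist p (e (ι k x)) := dist_triangle _ _ _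
        _ < r (k + 1) + r k := add_lt_add (by rw [dist_comm]; exact hy) hpd
        _ = r k + r (k + 1) := add_comm _ _
    have hfind : ι (k + 1) x = Nat.find hj := by rw [hιs k, hfs]; exact dif_pos hj
    rw [hfind]
    exact ⟨(Nat.find_spec hj).2, (Nat.find_spec hj).1⟩
  have hinv : ∀ x ∈ G, ∀ k, ∃ p ∈ B x, dist p (e (ι k x)) < r k := by
    intro x hx k
    induction k with
    | zero => exact (hQ0x x hx).2
    | succ k ih => exact (hstep x k ih).1
  have hrsum : ∀ k, r k + r (k + 1) ≤ 2 * ε * (1 / 2) ^ k := by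
    intro k
    rw [hr]
    simp only [pow_succ]
    nlinarith [pow_pos (by norm_num : (0:ℝ) < 1 / 2) k]
  have hcauchy : ∀ x ∈ G, CauchySeq fun k => e (ι k x) := by
    intro x hx
    refine cauchySeq_of_le_geometric (1 / 2 : ℝ) (2 * ε) (by norm_num) fun k => ?_
    calc dist (e (ι k x)) (e (ι (k + 1) x)) = dist (e (ι (k + 1) x)) (e (ι k x)) := dist_comm _ _
      _ ≤ r k + r (k + 1) := ((hstep x k (hinv x hx k)).2).le
      _ ≤ 2 * ε * (1 / 2) ^ k := hrsum k
  have hlim : ∀ x, x ∈ G → ∃ l, Tendsto (fun k => e (ι k x)) atTop (𝓝 l) :=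
    fun x hx => cauchySeq_tendsto_of_complete (hcauchy x hx)
  set τ : S → V × StrongDual ℝ V := fun x => if hx : x ∈ G then (hlim x hx).choose else e 0 with hτ
  have hτlim : ∀ x ∈ G, Tendsto (fun k => e (ι k x)) atTop (𝓝 (τ x)) := by
    intro x hx
    have : τ x = (hlim x hx).choose := by rw [hτ]; exact dif_pos hx
    rw [this]
    exact (hlim x hx).choose_spec
  have hgeo : ∀ x ∈ G, ∀ k, dist (e (ι k x)) (e (ι 0 x)) ≤ 4 * ε - 4 * ε * (1 / 2) ^ k := by
    intro x hx k
    induction k with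
    | zero => simp
    | succ k ih =>
      have h1 := (hstep x k (hinv x hx k)).2
      calc dist (e (ι (k + 1) x)) (e (ι 0 x))
          ≤ dist (e (ι (k + 1) x)) (e (ι k x)) + dist (e (ι k x)) (e (ι 0 x)) :=
            dist_triangle _ _ _
        _ ≤ 2 * ε * (1 / 2) ^ k + (4 * ε - 4 * ε * (1 / 2) ^ k) :=
            add_le_add (h1.le.trans (hrsum k)) ih
        _ = 4 * ε - 4 * ε * (1 / 2) ^ (k + 1) := by rw [pow_succ]; ring
  have hτd : ∀ x ∈ G, dist (τ x) (v x, v' x) ≤ 5 * ε := by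
    intro x hx
    have h0 : dist (e (ι 0 x)) (v x, v' x) < ε := (hQ0x x hx).1
    have h4 : dist (τ x) (e (ι 0 x)) ≤ 4 * ε := by
      have hto : Tendsto (fun k => dist (e (ι k x)) (e (ι 0 x))) atTop
          (𝓝 (dist (τ x) (e (ι 0 x)))) := (hτlim x hx).dist tendsto_const_nhds
      refine le_of_tendsto hto (Eventually.of_forall fun k => ?_)
      have h5 := hgeo x hx k
      nlinarith [pow_pos (by norm_num : (0:ℝ) < 1 / 2) k]
    calc dist (τ x) (v x, v' x) ≤ dist (τ x) (e (ι 0 x)) + dist (e (ι 0 x)) (v x, v' x) :=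
          dist_triangle _ _ _
      _ ≤ 4 * ε + ε := add_le_add h4 h0.le
      _ = 5 * ε := by ring
  have hτB : ∀ x ∈ G, τ x ∈ B x := by
    intro x hx
    have hcl : τ x ∈ closure (B x) := by
      rw [Metric.mem_closure_iff]
      intro δ hδ
      have h1 : Tendsto (fun k => dist (τ x) (e (ι k x))) atTop (𝓝 0) := by
        have h1' := (hτlim x hx).dist (tendsto_const_nhds (x := τ x))
        simp only [dist_self] at h1'
        refine h1'.congr fun k => dist_comm _ _
      have h2 : Tendsto r atTop (𝓝 0) := by
        rw [hr]
        have := tendsto_pow_atTop_nhds_zero_of_lt_one (by norm_num : (0:ℝ) ≤ 1 / 2)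
          (by norm_num : (1 / 2 : ℝ) < 1)
        simpa using this.const_mul ε
      obtain ⟨k, hk1, hk2⟩ := ((h1.eventually_lt_const (by positivity : (0:ℝ) < δ / 2)).and
        (h2.eventually_lt_const (by positivity : (0:ℝ) < δ / 2))).exists
      obtain ⟨p, hpB, hpd⟩ := hinv x hx k
      refine ⟨p, hpB, ?_⟩
      calc dist (τ x) p ≤ dist (τ x) (e (ι k x)) + dist (e (ι k x)) p := dist_triangle _ _ _
        _ < δ / 2 + δ / 2 := add_lt_add hk1 (by rw [dist_comm] at hpd; exact hpd.trans hk2)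
        _ = δ := by ring
    rwa [(hBcl x).closure_eq] at hcl
  have hτmeas : StronglyMeasurable τ := by
    have hFmeas : ∀ k : ℕ, StronglyMeasurable fun x => if x ∈ G then e (ι k x) else e 0 := by
      intro k
      have hι' : Measurable fun x => if x ∈ G then ι k x else 0 :=
        Measurable.ite hGmeas (hιmeas k) measurable_const
      have heq : (fun x => if x ∈ G then e (ι k x) else e 0) =
          fun x => e (if x ∈ G then ι k x else 0) := by
        funext x; split_ifs <;> rfl
      rw [heq, stronglyMeasurable_iff_measurable_separable]
      refine ⟨measurable_from_top.comp hι', ?_⟩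
      exact ((Set.countable_range e).isSeparable).mono (Set.range_comp_subset_range _ e)
    refine stronglyMeasurable_of_tendsto atTop hFmeas (tendsto_pi_nhds.mpr fun x => ?_)
    by_cases hx : x ∈ G
    · simp only [if_pos hx]
      exact hτlim x hx
    · simp only [if_neg hx]
      have : τ x = e 0 := by rw [hτ]; exact dif_neg hx
      rw [this]
      exact tendsto_const_nhds
  exact ⟨G, τ, hGmeas, hτmeas, hcov, fun x hx => ⟨hτB x hx, hτd x hx⟩⟩

end AuxLemmas

private lemma five_ofReal_le {a b : ℝ} (ha : 0 ≤ a) (hb : 5 * a ≤ b) :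
    ENNReal.ofReal a + ((ENNReal.ofReal a + ENNReal.ofReal a) +
      (ENNReal.ofReal a + ENNReal.ofReal a)) ≤ ENNReal.ofReal b := by
  have h2 : (0:ℝ) ≤ a + a := by linarith
  rw [← ENNReal.ofReal_add ha ha, ← ENNReal.ofReal_add h2 h2,
    ← ENNReal.ofReal_add ha (by linarith)]
  exact ENNReal.ofReal_le_ofReal (by linarith)

set_option maxHeartbeats 2000000 in
/-- Let `A, Aⁿ : S → 𝔐(V × V*)` be measurable, each value maximal monotone.
Assume (a) `Aⁿ(x) ⇥ A(x)` for a.e. `x`; (b) the canonical extensions `𝒜, 𝒜ⁿ` are maximal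
monotone; (c) there exist `[αₙ, βₙ] ∈ Gr 𝒜ⁿ` converging strongly in `L^p(S,V) × L^q(S,V*)`
to some `[α, β]`.  Then `𝒜ⁿ ⇥ 𝒜`. -/
theorem canonExt_graphConv
    [CompleteSpace V] [TopologicalSpace.SeparableSpace V]
    (hrefl : Function.Surjective (NormedSpace.inclusionInDoubleDual ℝ V))
    (hsf : SigmaFinite μ) (hcomp : μ.IsComplete)
    (p q : ℝ) (hp : 1 < p) (hq : 1 < q) (hpq : 1 / p + 1 / q = 1)
    (A : S → V → Set (StrongDual ℝ V)) (An : ℕ → S → V → Set (StrongDual ℝ V))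
    (hAmax : ∀ x, MaxMonotoneOp (A x)) (hAnmax : ∀ n x, MaxMonotoneOp (An n x))
    (hAmeas : MeasurableMultimap A) (hAnmeas : ∀ n, MeasurableMultimap (An n))
    (hptwise : ∀ᵐ x ∂μ, GraphConv (fun n => An n x) (A x))
    (hmax : LpMaxMonotoneOp (ENNReal.ofReal p) (ENNReal.ofReal q) μ
      (canonExt A (ENNReal.ofReal p) (ENNReal.ofReal q) μ))
    (hmaxn : ∀ n, LpMaxMonotoneOp (ENNReal.ofReal p) (ENNReal.ofReal q) μ
      (canonExt (An n) (ENNReal.ofReal p) (ENNReal.ofReal q) μ))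
    (hrec : ∃ (αn : ℕ → Lp V (ENNReal.ofReal p) μ)
              (βn : ℕ → Lp (StrongDual ℝ V) (ENNReal.ofReal q) μ)
              (α : Lp V (ENNReal.ofReal p) μ) (β : Lp (StrongDual ℝ V) (ENNReal.ofReal q) μ),
      (∀ n, βn n ∈ canonExt (An n) (ENNReal.ofReal p) (ENNReal.ofReal q) μ (αn n)) ∧
      Tendsto (fun n => ‖αn n - α‖) atTop (𝓝 0) ∧
      Tendsto (fun n => ‖βn n - β‖) atTop (𝓝 0)) :
    LpGraphConv (ENNReal.ofReal p) (ENNReal.ofReal q) μ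
      (fun n => canonExt (An n) (ENNReal.ofReal p) (ENNReal.ofReal q) μ)
      (canonExt A (ENNReal.ofReal p) (ENNReal.ofReal q) μ) := by
  classical
  haveI hsepD : TopologicalSpace.SeparableSpace (StrongDual ℝ V) := dual_separable hrefl
  set P := ENNReal.ofReal p with hPdef
  set Q := ENNReal.ofReal q with hQdef
  have hP1 : 1 ≤ P := ENNReal.one_le_ofReal.mpr hp.le
  have hQ1 : 1 ≤ Q := ENNReal.one_le_ofReal.mpr hq.le
  have hPne : P ≠ ∞ := ENNReal.ofReal_ne_top
  have hQne : Q ≠ ∞ := ENNReal.ofReal_ne_top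
  have hPne0 : P ≠ 0 := (lt_of_lt_of_le zero_lt_one hP1).ne'
  have hQne0 : Q ≠ 0 := (lt_of_lt_of_le zero_lt_one hQ1).ne'
  haveI : Fact (1 ≤ P) := ⟨hP1⟩
  haveI : Fact (1 ≤ Q) := ⟨hQ1⟩
  obtain ⟨αn, βn, α, β, hgr, hα, hβ⟩ := hrec
  intro v v' hv'
  have hv'ae : ∀ᵐ x ∂μ, v' x ∈ A x (v x) := hv'
  -- the pointwise graphs of `An n`
  set Bn : ℕ → S → Set (V × StrongDual ℝ V) := fun n x => {z : V × StrongDual ℝ V | z.2 ∈ An n x z.1}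
    with hBn
  -- MAIN CLAIM: eventually there are graph points of the extension within `ε₀`.
  have claim : ∀ ε₀ : ℝ, 0 < ε₀ → ∀ᶠ n in atTop,
      ∃ (W : Lp V P μ) (W' : Lp (StrongDual ℝ V) Q μ),
        W' ∈ canonExt (An n) P Q μ W ∧ ‖W - v‖ ≤ ε₀ ∧ ‖W' - v'‖ ≤ ε₀ := by
    intro ε₀ hε₀
    have hmem1 : MemLp (⇑α - ⇑v) P μ := (Lp.memLp α).sub (Lp.memLp v)
    have hmem2 : MemLp (⇑β - ⇑v') Q μ := (Lp.memLp β).sub (Lp.memLp v')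
    have hof4 : (ENNReal.ofReal (ε₀ / 8)) ≠ 0 := (ENNReal.ofReal_pos.mpr (by positivity)).ne'
    obtain ⟨K1, hK1m, hK1f, hK1⟩ := hmem1.exists_eLpNorm_indicator_compl_lt hPne hof4
    obtain ⟨K2, hK2m, hK2f, hK2⟩ := hmem2.exists_eLpNorm_indicator_compl_lt hQne hof4
    set K := K1 ∪ K2 with hK
    have hKm : MeasurableSet K := hK1m.union hK2m
    have hKf : μ K < ∞ := (measure_union_le _ _).trans_lt (ENNReal.add_lt_top.mpr ⟨hK1f, hK2f⟩)
    have hKc1 : eLpNorm (Kᶜ.indicator (⇑α - ⇑v)) P μ ≤ ENNReal.ofReal (ε₀ / 8) := by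
      refine le_trans (eLpNorm_mono fun x => ?_) hK1.le
      by_cases hx : x ∈ Kᶜ
      · rw [Set.indicator_of_mem hx, Set.indicator_of_mem
          (Set.compl_subset_compl.mpr Set.subset_union_left hx)]
      · rw [Set.indicator_of_notMem hx]; simp
    have hKc2 : eLpNorm (Kᶜ.indicator (⇑β - ⇑v')) Q μ ≤ ENNReal.ofReal (ε₀ / 8) := by
      refine le_trans (eLpNorm_mono fun x => ?_) hK2.le
      by_cases hx : x ∈ Kᶜ
      · rw [Set.indicator_of_mem hx, Set.indicator_of_mem
          (Set.compl_subset_compl.mpr Set.subset_union_right hx)]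
      · rw [Set.indicator_of_notMem hx]; simp
    obtain ⟨δ1, hδ1pos, hδ1⟩ := hmem1.eLpNorm_indicator_le hP1 hPne
      (show (0:ℝ) < ε₀ / 8 by positivity)
    obtain ⟨δ2, hδ2pos, hδ2⟩ := hmem2.eLpNorm_indicator_le hQ1 hQne
      (show (0:ℝ) < ε₀ / 8 by positivity)
    -- choose ε according to μ K
    have hrpfin : μ K ^ (1 / P.toReal) ≠ ∞ :=
      (ENNReal.rpow_lt_top_of_nonneg (by positivity) hKf.ne).ne
    have hrqfin : μ K ^ (1 / Q.toReal) ≠ ∞ :=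
      (ENNReal.rpow_lt_top_of_nonneg (by positivity) hKf.ne).ne
    set Cp := (μ K ^ (1 / P.toReal)).toReal with hCp
    set Cq := (μ K ^ (1 / Q.toReal)).toReal with hCq
    have hCp0 : 0 ≤ Cp := ENNReal.toReal_nonneg
    have hCq0 : 0 ≤ Cq := ENNReal.toReal_nonneg
    set ε := min (ε₀ / 40 / (Cp + 1)) (ε₀ / 40 / (Cq + 1)) with hεdef
    have hεpos : 0 < ε := lt_min (by positivity) (by positivity)
    have hkeyP : ENNReal.ofReal (5 * ε) * μ K ^ (1 / P.toReal) ≤ ENNReal.ofReal (ε₀ / 8) := by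
      rw [← ENNReal.ofReal_toReal hrpfin, ← hCp,
        ← ENNReal.ofReal_mul (by positivity)]
      refine ENNReal.ofReal_le_ofReal ?_
      have hε1 : ε ≤ ε₀ / 40 / (Cp + 1) := min_le_left _ _
      have h20 : 5 * (ε₀ / 40 / (Cp + 1)) * Cp ≤ ε₀ / 8 := by
        have he : 5 * (ε₀ / 40 / (Cp + 1)) * Cp = (ε₀ * Cp) / (8 * (Cp + 1)) := by
          field_simp
          ring
        rw [he, div_le_iff₀ (by positivity)]
        nlinarith
      nlinarith [mul_nonneg (sub_nonneg.mpr hε1) hCp0]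
    have hkeyQ : ENNReal.ofReal (5 * ε) * μ K ^ (1 / Q.toReal) ≤ ENNReal.ofReal (ε₀ / 8) := by
      rw [← ENNReal.ofReal_toReal hrqfin, ← hCq,
        ← ENNReal.ofReal_mul (by positivity)]
      refine ENNReal.ofReal_le_ofReal ?_
      have hε1 : ε ≤ ε₀ / 40 / (Cq + 1) := min_le_right _ _
      have h20 : 5 * (ε₀ / 40 / (Cq + 1)) * Cq ≤ ε₀ / 8 := by
        have he : 5 * (ε₀ / 40 / (Cq + 1)) * Cq = (ε₀ * Cq) / (8 * (Cq + 1)) := by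
          field_simp
          ring
        rw [he, div_le_iff₀ (by positivity)]
        nlinarith
      nlinarith [mul_nonneg (sub_nonneg.mpr hε1) hCq0]
    -- selections
    have hsel : ∀ n, ∃ (G : Set S) (τ : S → V × StrongDual ℝ V), MeasurableSet G ∧
        StronglyMeasurable τ ∧
        (∀ x, (∃ z ∈ Bn n x, dist z (v x, v' x) < ε / 2) → x ∈ G) ∧
        ∀ x ∈ G, τ x ∈ Bn n x ∧ dist (τ x) (v x, v' x) ≤ 5 * ε := fun n =>
      krn_selection (Bn n) (fun U hU => hAnmeas n U hU)
        (fun x => maxMonotoneOp_isClosed_graph (hAnmax n x))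
        (⇑v) (⇑v') (Lp.stronglyMeasurable v) (Lp.stronglyMeasurable v') hεpos
    choose G τ hGm hτm hGcov hτprop using hsel
    -- a.e. eventual coverage
    have hae : ∀ᵐ x ∂μ, ∀ᶠ n in atTop, x ∈ G n := by
      filter_upwards [hptwise, hv'ae] with x hx1 hx2
      obtain ⟨w, w', hw, hwv, hwv'⟩ := hx1 (v x) (v' x) hx2
      have e1 : ∀ᶠ n in atTop, w n ∈ Metric.ball (v x) (ε / 2) :=
        hwv (Metric.ball_mem_nhds _ (by positivity))
      have e2 : ∀ᶠ n in atTop, w' n ∈ Metric.ball (v' x) (ε / 2) :=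
        hwv' (Metric.ball_mem_nhds _ (by positivity))
      filter_upwards [e1, e2] with n hn1 hn2
      refine hGcov n x ⟨(w n, w' n), hw n, ?_⟩
      rw [Prod.dist_eq]
      exact max_lt (Metric.mem_ball.mp hn1) (Metric.mem_ball.mp hn2)
    -- the bad sets
    set D : ℕ → Set S := fun n => K \ G n with hD
    have hDm : ∀ n, MeasurableSet (D n) := fun n => hKm.diff (hGm n)
    have hDtend : Tendsto (fun n => μ (D n)) atTop (𝓝 0) := by
      set E : ℕ → Set S := fun n => ⋃ m, ⋃ (_ : n ≤ m), D m with hE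
      have hEm : ∀ n, MeasurableSet (E n) := fun n =>
        MeasurableSet.iUnion fun m => MeasurableSet.iUnion fun _ => hDm m
      have hEanti : Antitone E := by
        intro a b hab x hx
        simp only [hE, Set.mem_iUnion] at hx ⊢
        obtain ⟨m, hm, hxm⟩ := hx
        exact ⟨m, hab.trans hm, hxm⟩
      have hEK : ∀ n, E n ⊆ K := fun n =>
        Set.iUnion₂_subset fun m _ => Set.diff_subset
      have hInull : μ (⋂ n, E n) = 0 := by
        have hsub : (⋂ n, E n) ⊆ {x | ¬ ∀ᶠ n in atTop, x ∈ G n} := by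
          intro x hx
          simp only [Set.mem_setOf_eq, eventually_atTop, not_exists, not_forall]
          intro N
          have hxN := Set.mem_iInter.mp hx N
          obtain ⟨m, hm⟩ := Set.mem_iUnion.mp hxN
          obtain ⟨hNm, hxm⟩ := Set.mem_iUnion.mp hm
          exact ⟨m, hNm, hxm.2⟩
        refine measure_mono_null hsub ?_
        exact hae
      have htend := tendsto_measure_iInter_atTop (fun n => (hEm n).nullMeasurableSet)
        hEanti ⟨0, ((measure_mono (hEK 0)).trans_lt hKf).ne⟩
      rw [hInull] at htend
      refine tendsto_of_tendsto_of_tendsto_of_le_of_le tendsto_const_nhds htend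
        (fun n => zero_le) (fun n => measure_mono ?_)
      intro x hx
      simp only [hE, Set.mem_iUnion]
      exact ⟨n, le_rfl, hx⟩
    have hN1 : ∀ᶠ n in atTop, μ (D n) ≤ ENNReal.ofReal δ1 :=
      hDtend.eventually (eventually_le_nhds (ENNReal.ofReal_pos.mpr hδ1pos))
    have hN2 : ∀ᶠ n in atTop, μ (D n) ≤ ENNReal.ofReal δ2 :=
      hDtend.eventually (eventually_le_nhds (ENNReal.ofReal_pos.mpr hδ2pos))
    have hN3 : ∀ᶠ n in atTop, eLpNorm (⇑(αn n) - ⇑α) P μ ≤ ENNReal.ofReal (ε₀ / 8) := by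
      have h := hα.eventually_le_const (show (0:ℝ) < ε₀ / 8 by positivity)
      filter_upwards [h] with n hn
      have heq : eLpNorm (⇑(αn n) - ⇑α) P μ = ENNReal.ofReal ‖αn n - α‖ := by
        rw [Lp.norm_def, ENNReal.ofReal_toReal (Lp.memLp _).eLpNorm_ne_top]
        exact (eLpNorm_congr_ae (Lp.coeFn_sub (αn n) α)).symm
      rw [heq]
      exact ENNReal.ofReal_le_ofReal hn
    have hN4 : ∀ᶠ n in atTop, eLpNorm (⇑(βn n) - ⇑β) Q μ ≤ ENNReal.ofReal (ε₀ / 8) := by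
      have h := hβ.eventually_le_const (show (0:ℝ) < ε₀ / 8 by positivity)
      filter_upwards [h] with n hn
      have heq : eLpNorm (⇑(βn n) - ⇑β) Q μ = ENNReal.ofReal ‖βn n - β‖ := by
        rw [Lp.norm_def, ENNReal.ofReal_toReal (Lp.memLp _).eLpNorm_ne_top]
        exact (eLpNorm_congr_ae (Lp.coeFn_sub (βn n) β)).symm
      rw [heq]
      exact ENNReal.ofReal_le_ofReal hn
    filter_upwards [hN1, hN2, hN3, hN4] with n h1 h2 h3 h4
    -- construct the patched pair
    set H := G n ∩ K with hH
    have hHm : MeasurableSet H := (hGm n).inter hKm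
    have hτ1 : ∀ x ∈ H, ‖(τ n x).1 - v x‖ ≤ 5 * ε := by
      intro x hx
      have hd := (hτprop n x hx.1).2
      rw [Prod.dist_eq] at hd
      rw [← dist_eq_norm]
      exact (le_max_left _ _).trans hd
    have hτ2 : ∀ x ∈ H, ‖(τ n x).2 - v' x‖ ≤ 5 * ε := by
      intro x hx
      have hd := (hτprop n x hx.1).2
      rw [Prod.dist_eq] at hd
      rw [← dist_eq_norm]
      exact (le_max_right _ _).trans hd
    set w : S → V := fun x => if x ∈ H then (τ n x).1 else αn n x with hwdef
    set w' : S → StrongDual ℝ V := fun x => if x ∈ H then (τ n x).2 else βn n x with hw'def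
    have hτ1SM : StronglyMeasurable fun x => (τ n x).1 :=
      continuous_fst.comp_stronglyMeasurable (hτm n)
    have hτ2SM : StronglyMeasurable fun x => (τ n x).2 :=
      continuous_snd.comp_stronglyMeasurable (hτm n)
    have hwSM : StronglyMeasurable w := hτ1SM.ite hHm (Lp.stronglyMeasurable (αn n))
    have hw'SM : StronglyMeasurable w' := hτ2SM.ite hHm (Lp.stronglyMeasurable (βn n))
    -- MemLp of `w`
    have hwmem : MemLp w P μ := by
      have hw_eq : w = ⇑(αn n) + H.indicator (fun x => (τ n x).1 - αn n x) := by
        funext x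
        simp only [hwdef]
        by_cases hx : x ∈ H
        · simp only [if_pos hx, Pi.add_apply, Set.indicator_of_mem hx]
          abel
        · simp only [if_neg hx, Pi.add_apply, Set.indicator_of_notMem hx, add_zero]
      have hindSM : StronglyMeasurable (H.indicator fun x => (τ n x).1 - αn n x) :=
        (hτ1SM.sub (Lp.stronglyMeasurable (αn n))).indicator hHm
      have hFmem : MemLp (fun x => K.indicator (fun _ => (5 * ε : ℝ)) x + ‖v x - αn n x‖) P μ :=
        (memLp_indicator_const P hKm (5 * ε : ℝ) (Or.inr hKf.ne)).add
          ((Lp.memLp v).sub (Lp.memLp (αn n))).norm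
      have hindmem : MemLp (H.indicator fun x => (τ n x).1 - αn n x) P μ := by
        refine hFmem.of_le hindSM.aestronglyMeasurable (ae_of_all _ fun x => ?_)
        have hge : (0:ℝ) ≤ K.indicator (fun _ => (5 * ε : ℝ)) x + ‖v x - αn n x‖ :=
          add_nonneg (Set.indicator_nonneg (fun _ _ => by positivity) x) (norm_nonneg _)
        by_cases hx : x ∈ H
        · rw [Set.indicator_of_mem hx]
          rw [Real.norm_eq_abs, abs_of_nonneg hge, Set.indicator_of_mem hx.2]
          have h5 := hτ1 x hx
          have htri : ‖(τ n x).1 - αn n x‖ ≤ ‖(τ n x).1 - v x‖ + ‖v x - αn n x‖ := by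
            have := dist_triangle ((τ n x).1) (v x) (αn n x)
            simpa [dist_eq_norm] using this
          linarith
        · rw [Set.indicator_of_notMem hx]
          rw [Real.norm_eq_abs, abs_of_nonneg hge]
          simpa using hge
      rw [hw_eq]
      exact (Lp.memLp (αn n)).add hindmem
    -- MemLp of `w'`
    have hw'mem : MemLp w' Q μ := by
      have hw_eq : w' = ⇑(βn n) + H.indicator (fun x => (τ n x).2 - βn n x) := by
        funext x
        simp only [hw'def]
        by_cases hx : x ∈ H
        · simp only [if_pos hx, Pi.add_apply, Set.indicator_of_mem hx]
          abel
        · simp only [if_neg hx, Pi.add_apply, Set.indicator_of_notMem hx, add_zero]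
      have hindSM : StronglyMeasurable (H.indicator fun x => (τ n x).2 - βn n x) :=
        (hτ2SM.sub (Lp.stronglyMeasurable (βn n))).indicator hHm
      have hFmem : MemLp (fun x => K.indicator (fun _ => (5 * ε : ℝ)) x + ‖v' x - βn n x‖) Q μ :=
        (memLp_indicator_const Q hKm (5 * ε : ℝ) (Or.inr hKf.ne)).add
          ((Lp.memLp v').sub (Lp.memLp (βn n))).norm
      have hindmem : MemLp (H.indicator fun x => (τ n x).2 - βn n x) Q μ := by
        refine hFmem.of_le hindSM.aestronglyMeasurable (ae_of_all _ fun x => ?_)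
        have hge : (0:ℝ) ≤ K.indicator (fun _ => (5 * ε : ℝ)) x + ‖v' x - βn n x‖ :=
          add_nonneg (Set.indicator_nonneg (fun _ _ => by positivity) x) (norm_nonneg _)
        by_cases hx : x ∈ H
        · rw [Set.indicator_of_mem hx]
          rw [Real.norm_eq_abs, abs_of_nonneg hge, Set.indicator_of_mem hx.2]
          have h5 := hτ2 x hx
          have htri : ‖(τ n x).2 - βn n x‖ ≤ ‖(τ n x).2 - v' x‖ + ‖v' x - βn n x‖ := by
            have := dist_triangle ((τ n x).2) (v' x) (βn n x)
            simpa [dist_eq_norm] using this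
          linarith
        · rw [Set.indicator_of_notMem hx]
          rw [Real.norm_eq_abs, abs_of_nonneg hge]
          simpa using hge
      rw [hw_eq]
      exact (Lp.memLp (βn n)).add hindmem
    refine ⟨hwmem.toLp w, hw'mem.toLp w', ?_, ?_, ?_⟩
    · -- membership in the graph of the canonical extension
      show ∀ᵐ x ∂μ, (hw'mem.toLp w') x ∈ An n x ((hwmem.toLp w) x)
      have hgrn : ∀ᵐ x ∂μ, βn n x ∈ An n x (αn n x) := hgr n
      filter_upwards [hwmem.coeFn_toLp, hw'mem.coeFn_toLp, hgrn] with x hx1 hx2 hx3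
      rw [hx1, hx2]
      simp only [hwdef, hw'def]
      by_cases hx : x ∈ H
      · simp only [if_pos hx]
        exact (hτprop n x hx.1).1
      · simp only [if_neg hx]
        exact hx3
    · -- ‖W - v‖ ≤ ε₀
      rw [Lp.norm_def]
      refine ENNReal.toReal_le_of_le_ofReal hε₀.le ?_
      have hae2 : ⇑(hwmem.toLp w - v) =ᵐ[μ] fun x => w x - v x := by
        filter_upwards [Lp.coeFn_sub (hwmem.toLp w) v, hwmem.coeFn_toLp] with x hx1 hx2
        rw [hx1]
        simp [hx2]
      rw [eLpNorm_congr_ae hae2]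
      have hdecomp : (fun x => w x - v x) =
          (H.indicator fun x => (τ n x).1 - v x) + ((Kᶜ.indicator (⇑(αn n) - ⇑α) +
            (D n).indicator (⇑(αn n) - ⇑α)) + (Kᶜ.indicator (⇑α - ⇑v) +
            (D n).indicator (⇑α - ⇑v))) := by
        funext x
        simp only [Pi.add_apply, Pi.sub_apply]
        simp only [hwdef]
        by_cases hx : x ∈ H
        · have hxK : x ∉ Kᶜ := fun hc => hc hx.2
          have hxD : x ∉ D n := fun hc => hc.2 hx.1
          rw [if_pos hx, Set.indicator_of_mem hx, Set.indicator_of_notMem hxK,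
            Set.indicator_of_notMem hxD, Set.indicator_of_notMem hxK,
            Set.indicator_of_notMem hxD]
          abel
        · have hxH : x ∉ H := hx
          rw [if_neg hx, Set.indicator_of_notMem hx]
          by_cases hxK : x ∈ K
          · have hxD : x ∈ D n := ⟨hxK, fun hc => hx ⟨hc, hxK⟩⟩
            have hxKc : x ∉ Kᶜ := fun hc => hc hxK
            rw [Set.indicator_of_notMem hxKc, Set.indicator_of_mem hxD,
              Set.indicator_of_notMem hxKc, Set.indicator_of_mem hxD]
            simp only [Pi.sub_apply]
            abel
          · have hxKc : x ∈ Kᶜ := hxK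
            have hxD : x ∉ D n := fun hc => hxK hc.1
            rw [Set.indicator_of_mem hxKc, Set.indicator_of_notMem hxD,
              Set.indicator_of_mem hxKc, Set.indicator_of_notMem hxD]
            simp only [Pi.sub_apply]
            abel
      rw [hdecomp]
      have hsm1 : AEStronglyMeasurable (H.indicator fun x => (τ n x).1 - v x) μ :=
        ((hτ1SM.sub (Lp.stronglyMeasurable v)).indicator hHm).aestronglyMeasurable
      have hsmKc : AEStronglyMeasurable (Kᶜ.indicator (⇑(αn n) - ⇑α)) μ :=
        ((Lp.stronglyMeasurable (αn n)).sub (Lp.stronglyMeasurable α)).aestronglyMeasurable.indicator hKm.compl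
      have hsmD : AEStronglyMeasurable ((D n).indicator (⇑(αn n) - ⇑α)) μ :=
        ((Lp.stronglyMeasurable (αn n)).sub (Lp.stronglyMeasurable α)).aestronglyMeasurable.indicator (hDm n)
      have hsmKc2 : AEStronglyMeasurable (Kᶜ.indicator (⇑α - ⇑v)) μ :=
        ((Lp.stronglyMeasurable α).sub (Lp.stronglyMeasurable v)).aestronglyMeasurable.indicator hKm.compl
      have hsmD2 : AEStronglyMeasurable ((D n).indicator (⇑α - ⇑v)) μ :=
        ((Lp.stronglyMeasurable α).sub (Lp.stronglyMeasurable v)).aestronglyMeasurable.indicator (hDm n)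
      have hT1 : eLpNorm (H.indicator fun x => (τ n x).1 - v x) P μ ≤ ENNReal.ofReal (ε₀ / 8) := by
        refine le_trans (eLpNorm_mono (g := K.indicator fun _ => (5 * ε : ℝ)) fun x => ?_) ?_
        · by_cases hx : x ∈ H
          · rw [Set.indicator_of_mem hx, Set.indicator_of_mem hx.2,
              Real.norm_eq_abs, abs_of_nonneg (by positivity)]
            exact hτ1 x hx
          · rw [Set.indicator_of_notMem hx]
            simp only [norm_zero]
            exact norm_nonneg _
        · rw [eLpNorm_indicator_const hKm hPne0 hPne, ← ofReal_norm_eq_enorm,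
            Real.norm_eq_abs, abs_of_nonneg (by positivity)]
          exact hkeyP
      have hT2a : eLpNorm (Kᶜ.indicator (⇑(αn n) - ⇑α)) P μ ≤ ENNReal.ofReal (ε₀ / 8) :=
        (eLpNorm_indicator_le _).trans h3
      have hT2b : eLpNorm ((D n).indicator (⇑(αn n) - ⇑α)) P μ ≤ ENNReal.ofReal (ε₀ / 8) :=
        (eLpNorm_indicator_le _).trans h3
      have hT2c : eLpNorm (Kᶜ.indicator (⇑α - ⇑v)) P μ ≤ ENNReal.ofReal (ε₀ / 8) := hKc1
      have hT2d : eLpNorm ((D n).indicator (⇑α - ⇑v)) P μ ≤ ENNReal.ofReal (ε₀ / 8) :=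
        hδ1 (D n) (hDm n) h1
      calc eLpNorm ((H.indicator fun x => (τ n x).1 - v x) + ((Kᶜ.indicator (⇑(αn n) - ⇑α) +
            (D n).indicator (⇑(αn n) - ⇑α)) + (Kᶜ.indicator (⇑α - ⇑v) +
            (D n).indicator (⇑α - ⇑v)))) P μ
          ≤ eLpNorm (H.indicator fun x => (τ n x).1 - v x) P μ +
            eLpNorm ((Kᶜ.indicator (⇑(αn n) - ⇑α) + (D n).indicator (⇑(αn n) - ⇑α)) +
              (Kᶜ.indicator (⇑α - ⇑v) + (D n).indicator (⇑α - ⇑v))) P μ :=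
            eLpNorm_add_le hsm1 (((hsmKc.add hsmD).add (hsmKc2.add hsmD2))) hP1
        _ ≤ eLpNorm (H.indicator fun x => (τ n x).1 - v x) P μ +
            (eLpNorm (Kᶜ.indicator (⇑(αn n) - ⇑α) + (D n).indicator (⇑(αn n) - ⇑α)) P μ +
              eLpNorm (Kᶜ.indicator (⇑α - ⇑v) + (D n).indicator (⇑α - ⇑v)) P μ) :=
            add_le_add_right (eLpNorm_add_le (hsmKc.add hsmD) (hsmKc2.add hsmD2) hP1) _
        _ ≤ eLpNorm (H.indicator fun x => (τ n x).1 - v x) P μ +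
            ((eLpNorm (Kᶜ.indicator (⇑(αn n) - ⇑α)) P μ +
                eLpNorm ((D n).indicator (⇑(αn n) - ⇑α)) P μ) +
              (eLpNorm (Kᶜ.indicator (⇑α - ⇑v)) P μ +
                eLpNorm ((D n).indicator (⇑α - ⇑v)) P μ)) := by
            refine add_le_add_right (add_le_add ?_ ?_) _
            · exact eLpNorm_add_le hsmKc hsmD hP1
            · exact eLpNorm_add_le hsmKc2 hsmD2 hP1
        _ ≤ ENNReal.ofReal (ε₀ / 8) + ((ENNReal.ofReal (ε₀ / 8) + ENNReal.ofReal (ε₀ / 8)) +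
              (ENNReal.ofReal (ε₀ / 8) + ENNReal.ofReal (ε₀ / 8))) := by
            exact add_le_add hT1 (add_le_add (add_le_add hT2a hT2b) (add_le_add hT2c hT2d))
        _ ≤ ENNReal.ofReal ε₀ := five_ofReal_le (by positivity) (by linarith)
    · -- ‖W' - v'‖ ≤ ε₀
      rw [Lp.norm_def]
      refine ENNReal.toReal_le_of_le_ofReal hε₀.le ?_
      have hae2 : ⇑(hw'mem.toLp w' - v') =ᵐ[μ] fun x => w' x - v' x := by
        filter_upwards [Lp.coeFn_sub (hw'mem.toLp w') v', hw'mem.coeFn_toLp] with x hx1 hx2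
        rw [hx1]
        simp [hx2]
      rw [eLpNorm_congr_ae hae2]
      have hdecomp : (fun x => w' x - v' x) =
          (H.indicator fun x => (τ n x).2 - v' x) + ((Kᶜ.indicator (⇑(βn n) - ⇑β) +
            (D n).indicator (⇑(βn n) - ⇑β)) + (Kᶜ.indicator (⇑β - ⇑v') +
            (D n).indicator (⇑β - ⇑v'))) := by
        funext x
        simp only [Pi.add_apply, Pi.sub_apply]
        simp only [hw'def]
        by_cases hx : x ∈ H
        · have hxK : x ∉ Kᶜ := fun hc => hc hx.2
          have hxD : x ∉ D n := fun hc => hc.2 hx.1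
          rw [if_pos hx, Set.indicator_of_mem hx, Set.indicator_of_notMem hxK,
            Set.indicator_of_notMem hxD, Set.indicator_of_notMem hxK,
            Set.indicator_of_notMem hxD]
          abel
        · rw [if_neg hx, Set.indicator_of_notMem hx]
          by_cases hxK : x ∈ K
          · have hxD : x ∈ D n := ⟨hxK, fun hc => hx ⟨hc, hxK⟩⟩
            have hxKc : x ∉ Kᶜ := fun hc => hc hxK
            rw [Set.indicator_of_notMem hxKc, Set.indicator_of_mem hxD,
              Set.indicator_of_notMem hxKc, Set.indicator_of_mem hxD]
            simp only [Pi.sub_apply]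
            abel
          · have hxKc : x ∈ Kᶜ := hxK
            have hxD : x ∉ D n := fun hc => hxK hc.1
            rw [Set.indicator_of_mem hxKc, Set.indicator_of_notMem hxD,
              Set.indicator_of_mem hxKc, Set.indicator_of_notMem hxD]
            simp only [Pi.sub_apply]
            abel
      rw [hdecomp]
      have hsm1 : AEStronglyMeasurable (H.indicator fun x => (τ n x).2 - v' x) μ :=
        ((hτ2SM.sub (Lp.stronglyMeasurable v')).indicator hHm).aestronglyMeasurable
      have hsmKc : AEStronglyMeasurable (Kᶜ.indicator (⇑(βn n) - ⇑β)) μ :=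
        ((Lp.stronglyMeasurable (βn n)).sub (Lp.stronglyMeasurable β)).aestronglyMeasurable.indicator hKm.compl
      have hsmD : AEStronglyMeasurable ((D n).indicator (⇑(βn n) - ⇑β)) μ :=
        ((Lp.stronglyMeasurable (βn n)).sub (Lp.stronglyMeasurable β)).aestronglyMeasurable.indicator (hDm n)
      have hsmKc2 : AEStronglyMeasurable (Kᶜ.indicator (⇑β - ⇑v')) μ :=
        ((Lp.stronglyMeasurable β).sub (Lp.stronglyMeasurable v')).aestronglyMeasurable.indicator hKm.compl
      have hsmD2 : AEStronglyMeasurable ((D n).indicator (⇑β - ⇑v')) μ :=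
        ((Lp.stronglyMeasurable β).sub (Lp.stronglyMeasurable v')).aestronglyMeasurable.indicator (hDm n)
      have hT1 : eLpNorm (H.indicator fun x => (τ n x).2 - v' x) Q μ ≤ ENNReal.ofReal (ε₀ / 8) := by
        refine le_trans (eLpNorm_mono (g := K.indicator fun _ => (5 * ε : ℝ)) fun x => ?_) ?_
        · by_cases hx : x ∈ H
          · rw [Set.indicator_of_mem hx, Set.indicator_of_mem hx.2,
              Real.norm_eq_abs, abs_of_nonneg (by positivity)]
            exact hτ2 x hx
          · rw [Set.indicator_of_notMem hx]
            simp only [norm_zero]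
            exact norm_nonneg _
        · rw [eLpNorm_indicator_const hKm hQne0 hQne, ← ofReal_norm_eq_enorm,
            Real.norm_eq_abs, abs_of_nonneg (by positivity)]
          exact hkeyQ
      have hT2a : eLpNorm (Kᶜ.indicator (⇑(βn n) - ⇑β)) Q μ ≤ ENNReal.ofReal (ε₀ / 8) :=
        (eLpNorm_indicator_le (⇑(βn n) - ⇑β)).trans h4
      have hT2b : eLpNorm ((D n).indicator (⇑(βn n) - ⇑β)) Q μ ≤ ENNReal.ofReal (ε₀ / 8) :=
        (eLpNorm_indicator_le (⇑(βn n) - ⇑β)).trans h4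
      have hT2c : eLpNorm (Kᶜ.indicator (⇑β - ⇑v')) Q μ ≤ ENNReal.ofReal (ε₀ / 8) := hKc2
      have hT2d : eLpNorm ((D n).indicator (⇑β - ⇑v')) Q μ ≤ ENNReal.ofReal (ε₀ / 8) :=
        hδ2 (D n) (hDm n) h2
      calc eLpNorm ((H.indicator fun x => (τ n x).2 - v' x) + ((Kᶜ.indicator (⇑(βn n) - ⇑β) +
            (D n).indicator (⇑(βn n) - ⇑β)) + (Kᶜ.indicator (⇑β - ⇑v') +
            (D n).indicator (⇑β - ⇑v')))) Q μ
          ≤ eLpNorm (H.indicator fun x => (τ n x).2 - v' x) Q μ +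
            eLpNorm ((Kᶜ.indicator (⇑(βn n) - ⇑β) + (D n).indicator (⇑(βn n) - ⇑β)) +
              (Kᶜ.indicator (⇑β - ⇑v') + (D n).indicator (⇑β - ⇑v'))) Q μ :=
            eLpNorm_add_le (ε := StrongDual ℝ V) hsm1 (((hsmKc.add hsmD).add (hsmKc2.add hsmD2))) hQ1
        _ ≤ eLpNorm (H.indicator fun x => (τ n x).2 - v' x) Q μ +
            (eLpNorm (Kᶜ.indicator (⇑(βn n) - ⇑β) + (D n).indicator (⇑(βn n) - ⇑β)) Q μ +
              eLpNorm (Kᶜ.indicator (⇑β - ⇑v') + (D n).indicator (⇑β - ⇑v')) Q μ) :=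
            add_le_add_right (eLpNorm_add_le (ε := StrongDual ℝ V) (hsmKc.add hsmD) (hsmKc2.add hsmD2) hQ1) _
        _ ≤ eLpNorm (H.indicator fun x => (τ n x).2 - v' x) Q μ +
            ((eLpNorm (Kᶜ.indicator (⇑(βn n) - ⇑β)) Q μ +
                eLpNorm ((D n).indicator (⇑(βn n) - ⇑β)) Q μ) +
              (eLpNorm (Kᶜ.indicator (⇑β - ⇑v')) Q μ +
                eLpNorm ((D n).indicator (⇑β - ⇑v')) Q μ)) := by
            refine add_le_add_right (add_le_add ?_ ?_) _
            · exact eLpNorm_add_le (ε := StrongDual ℝ V) hsmKc hsmD hQ1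
            · exact eLpNorm_add_le (ε := StrongDual ℝ V) hsmKc2 hsmD2 hQ1
        _ ≤ ENNReal.ofReal (ε₀ / 8) + ((ENNReal.ofReal (ε₀ / 8) + ENNReal.ofReal (ε₀ / 8)) +
              (ENNReal.ofReal (ε₀ / 8) + ENNReal.ofReal (ε₀ / 8))) := by
            exact add_le_add hT1 (add_le_add (add_le_add hT2a hT2b) (add_le_add hT2c hT2d))
        _ ≤ ENNReal.ofReal ε₀ := five_ofReal_le (by positivity) (by linarith)
  -- ASSEMBLY: extract a recovery sequence from the claim.
  set DD : ℕ → Set ℝ := fun n => {rr : ℝ | ∃ (W : Lp V P μ) (W' : Lp (StrongDual ℝ V) Q μ),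
    W' ∈ canonExt (An n) P Q μ W ∧ rr = max ‖W - v‖ ‖W' - v'‖} with hDD
  have hne : ∀ n, (DD n).Nonempty := fun n =>
    ⟨max ‖αn n - v‖ ‖βn n - v'‖, αn n, βn n, hgr n, rfl⟩
  have hbdd : ∀ n, BddBelow (DD n) := by
    intro n
    refine ⟨0, fun rr hrr => ?_⟩
    obtain ⟨W, W', -, rfl⟩ := hrr
    exact le_max_of_le_left (norm_nonneg _)
  set d : ℕ → ℝ := fun n => sInf (DD n) with hd
  have hd0 : ∀ n, 0 ≤ d n := by
    intro n
    refine le_csInf (hne n) fun rr hrr => ?_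
    obtain ⟨W, W', -, rfl⟩ := hrr
    exact le_max_of_le_left (norm_nonneg _)
  have hdlt : ∀ n, ∃ (W : Lp V P μ) (W' : Lp (StrongDual ℝ V) Q μ),
      W' ∈ canonExt (An n) P Q μ W ∧ max ‖W - v‖ ‖W' - v'‖ < d n + 1 / (n + 1) := by
    intro n
    obtain ⟨rr, hrrD, hrrlt⟩ := exists_lt_of_csInf_lt (hne n)
      (lt_add_of_pos_right _ (by positivity : (0:ℝ) < 1 / (n + 1)))
    obtain ⟨W, W', hWmem, rfl⟩ := hrrD
    exact ⟨W, W', hWmem, hrrlt⟩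
  choose W W' hWmem hWlt using hdlt
  have hdtend : Tendsto d atTop (𝓝 0) := by
    rw [Metric.tendsto_atTop]
    intro ε₁ hε₁
    obtain ⟨N, hN⟩ := eventually_atTop.mp (claim (ε₁ / 2) (by positivity))
    refine ⟨N, fun n hn => ?_⟩
    obtain ⟨W₀, W₀', hmem₀, hb1, hb2⟩ := hN n hn
    have hdn : d n ≤ ε₁ / 2 := by
      refine csInf_le_of_le (hbdd n) ⟨W₀, W₀', hmem₀, rfl⟩ ?_
      exact max_le hb1 hb2
    rw [Real.dist_eq, sub_zero, abs_of_nonneg (hd0 n)]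
    linarith
  have hbound : Tendsto (fun n => d n + 1 / (n + 1 : ℝ)) atTop (𝓝 0) := by
    have := hdtend.add tendsto_one_div_add_atTop_nhds_zero_nat
    simpa using this
  refine ⟨W, W', fun n => hWmem n, ?_, ?_⟩
  · refine squeeze_zero (fun n => norm_nonneg _) (fun n => ?_) hbound
    exact ((le_max_left _ _).trans (hWlt n).le)
  · refine squeeze_zero (fun n => norm_nonneg _) (fun n => ?_) hbound
    exact ((le_max_right _ _).trans (hWlt n).le)
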